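/- Let Hom_R(H, Λ²H) ⋊ GL(H) be the semidirect product with respect to the action (A·f)(u) = Λ²A(f(A⁻¹u)), i.e. with multiplication (f', A')·(f, A) = (f' + A'·f, A'A). Then the map sending (f, A) to the self-map (ξ, u) ↦ (2·f(Au) + Λ²A(ξ), Au) of 𝒢₂ is a group isomorphism from Hom_R(H, Λ²H) ⋊ GL(H) onto the full automorphism group Aut(𝒢₂) of the group 𝒢₂. -/

import Mathlib

/-! Every automorphism `φ` of `𝒢₂` maps commutators `[(0, v), (0, w)] = (v ∧ w, 0)` to
commutators, so it preserves the centre `Λ²H × 0`, which is additively spanned by wedges. Hence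
`φ (ξ, u) = (B ξ + h u, A u)` with `A`, `B`, `h` additive, `B (v ∧ w) = A v ∧ A w`, i.e. `B = Λ²A`,
and additivity of `h` follows by comparing both sides of `φ ((0, u) (0, w))`. Over a localization
of `ℤ` additive maps are linear, and applying the same to `φ⁻¹` shows that `A` is invertible. -/

namespace Paper

open ExteriorAlgebra

open scoped TensorProduct

variable {R : Type*} [CommRing R] {H : Type*} [AddCommGroup H] [Module R H]

theorem wedge_mem (v w : H) : ι R v * ι R w ∈ ⋀[R]^2 H := by
  rw [show (⋀[R]^2 H) = LinearMap.range (ι R (M := H)) * LinearMap.range (ι R (M := H)) from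
    sq _]
  exact Submodule.mul_mem_mul (LinearMap.mem_range_self _ v) (LinearMap.mem_range_self _ w)

/-- The wedge product `H × H → Λ²H` as a bilinear map. -/
noncomputable def wedge : H →ₗ[R] H →ₗ[R] ↥(⋀[R]^2 H) :=
  LinearMap.mk₂ R (fun v w => ⟨ι R v * ι R w, wedge_mem v w⟩)
    (fun v v' w => Subtype.ext (by simp [add_mul]))
    (fun c v w => Subtype.ext (by simp [smul_mul_assoc]))
    (fun v w w' => Subtype.ext (by simp [mul_add]))
    (fun c v w => Subtype.ext (by simp [mul_smul_comm]))

theorem wedge_self (v : H) : wedge (R := R) v v = 0 :=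
  Subtype.ext (ι_sq_zero v)

section G2

variable [Invertible (2 : R)]

/-- The group `𝒢₂ = Λ²H × H` with multiplication
`(a, v) · (b, w) = (½ v∧w + a + b, v + w)`. -/
noncomputable instance g2Group : Group (↥(⋀[R]^2 H) × H) where
  mul x y := (⅟(2 : R) • wedge (R := R) x.2 y.2 + x.1 + y.1, x.2 + y.2)
  one := (0, 0)
  inv x := (-x.1, -x.2)
  mul_assoc x y z := by
    refine Prod.ext ?_ ?_
    · show ⅟(2 : R) • wedge (R := R) (x.2 + y.2) z.2 +
          (⅟(2 : R) • wedge (R := R) x.2 y.2 + x.1 + y.1) + z.1 =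
        ⅟(2 : R) • wedge (R := R) x.2 (y.2 + z.2) + x.1 +
          (⅟(2 : R) • wedge (R := R) y.2 z.2 + y.1 + z.1)
      simp only [map_add, LinearMap.add_apply, smul_add]
      abel
    · exact add_assoc _ _ _
  one_mul x := by
    have : (⅟(2 : R) • wedge (R := R) (0 : H) x.2 + 0 + x.1, (0 : H) + x.2) = x := by
      simp
    exact this
  mul_one x := by
    have : (⅟(2 : R) • wedge (R := R) x.2 (0 : H) + x.1 + 0, x.2 + (0 : H)) = x := by
      simp
    exact this
  inv_mul_cancel x := by
    have : (⅟(2 : R) • wedge (R := R) (-x.2) x.2 + -x.1 + x.1, -x.2 + x.2) =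
        ((0, 0) : ↥(⋀[R]^2 H) × H) := by
      simp [wedge_self]
    exact this

end G2

theorem map_exteriorPower_le (f : H →ₗ[R] H) (n : ℕ) :
    Submodule.map (ExteriorAlgebra.map f).toLinearMap (⋀[R]^n H) ≤ ⋀[R]^n H := by
  rw [show ((⋀[R]^n H : Submodule R (ExteriorAlgebra R H))) =
      (LinearMap.range (ι R (M := H))) ^ n from rfl, Submodule.map_pow]
  have h1 : Submodule.map (ExteriorAlgebra.map f).toLinearMap
      (LinearMap.range (ι R (M := H))) ≤ LinearMap.range (ι R (M := H)) := by
    intro x hx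
    rw [Submodule.mem_map] at hx
    obtain ⟨y, hy, rfl⟩ := hx
    rw [LinearMap.mem_range] at hy
    obtain ⟨v, rfl⟩ := hy
    exact ⟨f v, (map_apply_ι f v).symm⟩
  induction n with
  | zero => simp
  | succ n ih =>
      rw [pow_succ, pow_succ]
      exact mul_le_mul' ih h1

/-- The endomorphism `Λ²f` of `Λ²H` induced by an endomorphism `f` of `H`. -/
noncomputable def map2 (f : H →ₗ[R] H) : ↥(⋀[R]^2 H) →ₗ[R] ↥(⋀[R]^2 H) :=
  (ExteriorAlgebra.map f).toLinearMap.restrict (p := ⋀[R]^2 H) (q := ⋀[R]^2 H)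
    (fun x hx => map_exteriorPower_le f 2 (Submodule.mem_map_of_mem hx))

def _root_.AddMonoidHom.toLinearMapOfIsLocalization {R : Type*} [CommRing R] [Algebra ℤ R]
    (S : Submonoid ℤ) [IsLocalization S R] {M N : Type*} [AddCommGroup M] [Module R M]
    [AddCommGroup N] [Module R N] (F : M →+ N) : M →ₗ[R] N where
  toFun := F
  map_add' := F.map_add
  map_smul' c x := by
    -- replace the given `ℤ`-algebra structure by the canonical one, for which `ℤ`-scalar towers
    -- are instances
    obtain rfl : ‹Algebra ℤ R› = Ring.toIntAlgebra R := Subsingleton.elim _ _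
    have := IsLocalization.linearMap_compatibleSMul S R M N
    exact F.toIntLinearMap.map_smul_of_tower c x

open scoped commutatorElement

local notation "Λ²H" => {x // x ∈ ⋀[R]^2 H}

theorem wedge_swap (v w : H) : wedge (R := R) w v = -wedge v w :=
  Subtype.ext (eq_neg_of_add_eq_zero_left (ι_add_mul_swap (R := R) w v))

theorem addMonoidHom_ext_wedge {N : Type*} [AddCommGroup N] {ψ χ : Λ²H →+ N}
    (h : ∀ v w : H, ψ (wedge v w) = χ (wedge v w)) : ψ = χ := by
  have hsq : (⋀[R]^2 H : Submodule R (ExteriorAlgebra R H)) =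
      LinearMap.range (ι R (M := H)) * LinearMap.range (ι R (M := H)) := sq _
  ext ⟨x, hx⟩
  induction (hsq ▸ hx : x ∈ _ * _) using Submodule.mul_induction_on' with
  | mem_mul_mem a ha b hb =>
    obtain ⟨v, rfl⟩ := ha
    obtain ⟨w, rfl⟩ := hb
    exact h v w
  | add a ha b hb iha ihb =>
    have ha' : a ∈ ⋀[R]^2 H := hsq ▸ ha
    have hb' : b ∈ ⋀[R]^2 H := hsq ▸ hb
    change ψ (⟨a, ha'⟩ + ⟨b, hb'⟩) = χ (⟨a, ha'⟩ + ⟨b, hb'⟩)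
    rw [map_add, map_add, iha, ihb]

theorem map2_wedge (f : H →ₗ[R] H) (v w : H) : map2 f (wedge v w) = wedge (f v) (f w) :=
  Subtype.ext (by simp [map2, wedge])

theorem map2_comp (f f' : H →ₗ[R] H) : map2 (f ∘ₗ f') = map2 f ∘ₗ map2 f' := by
  ext ξ
  simp [map2, ← map_comp_map]

theorem map2_id : map2 (LinearMap.id : H →ₗ[R] H) = LinearMap.id := by
  ext ξ
  simp [map2]

@[simp]
theorem map2_map2_symm (A : H ≃ₗ[R] H) (ξ : Λ²H) :
    map2 (A : H →ₗ[R] H) (map2 (A.symm : H →ₗ[R] H) ξ) = ξ := by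
  rw [← LinearMap.comp_apply, ← map2_comp, A.comp_symm, map2_id, LinearMap.id_apply]

section G2

variable [Invertible (2 : R)]

local notation "𝒢₂" => Λ²H × H

theorem g2_mul_def (x y : 𝒢₂) :
    x * y = (⅟(2 : R) • wedge x.2 y.2 + x.1 + y.1, x.2 + y.2) := rfl

theorem g2_one_def : (1 : 𝒢₂) = (0, 0) := rfl

theorem g2_inv_def (x : 𝒢₂) : x⁻¹ = (-x.1, -x.2) := rfl

theorem g2_commutatorElement (x y : 𝒢₂) : ⁅x, y⁆ = (wedge x.2 y.2, 0) := by
  ext1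
  · simp only [commutatorElement_def, g2_mul_def, g2_inv_def, map_add, map_neg,
      LinearMap.add_apply, LinearMap.neg_apply, wedge_self, wedge_swap x.2 y.2]
    linear_combination (norm := module) invOf_two_add_invOf_two (R := R) • wedge (R := R) x.2 y.2
  · simp [commutatorElement_def, g2_mul_def, g2_inv_def]

theorem g2_mk_eq_mul (ξ : Λ²H) (u : H) : ((ξ, u) : 𝒢₂) = (ξ, 0) * (0, u) := by
  simp [g2_mul_def]

theorem g2_mk_zero_mul (ξ η : Λ²H) : ((ξ, 0) : 𝒢₂) * (η, 0) = (ξ + η, 0) := by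
  simp [g2_mul_def]

theorem g2_zero_mk_mul (u w : H) :
    ((0, u) : 𝒢₂) * (0, w) = (⅟(2 : R) • wedge u w, u + w) := by
  simp [g2_mul_def]

-- The paper's map is `toEnd (f ∘ₗ A) A`; in this form composition needs no inverse of `A`.
noncomputable def toEnd (g : H →ₗ[R] Λ²H) (A : H →ₗ[R] H) : 𝒢₂ →* 𝒢₂ where
  toFun x := ((2 : R) • g x.2 + map2 A x.1, A x.2)
  map_one' := by simp [g2_one_def]
  map_mul' x y := by
    ext1
    · simp only [g2_mul_def, map_add, map_smul, map2_wedge, smul_add]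
      abel
    · exact map_add A x.2 y.2

theorem toEnd_apply (g : H →ₗ[R] Λ²H) (A : H →ₗ[R] H) (ξ : Λ²H) (u : H) :
    toEnd g A (ξ, u) = ((2 : R) • g u + map2 A ξ, A u) := rfl

theorem toEnd_comp (g g' : H →ₗ[R] Λ²H) (A A' : H →ₗ[R] H) :
    (toEnd g' A').comp (toEnd g A) = toEnd (g' ∘ₗ A + map2 A' ∘ₗ g) (A' ∘ₗ A) := by
  ext ⟨ξ, u⟩ : 1
  simp only [MonoidHom.comp_apply, toEnd_apply, map2_comp, map_add, map_smul, smul_add,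
    LinearMap.add_apply, LinearMap.comp_apply, add_assoc]

theorem toEnd_zero_id : toEnd (0 : H →ₗ[R] Λ²H) LinearMap.id = MonoidHom.id 𝒢₂ := by
  ext ⟨ξ, u⟩ : 1
  simp [toEnd_apply, map2_id]

theorem toEnd_inj {g g' : H →ₗ[R] Λ²H} {A A' : H →ₗ[R] H} :
    toEnd g A = toEnd g' A' ↔ g = g' ∧ A = A' := by
  refine ⟨fun h => ?_, fun h => h.1 ▸ h.2 ▸ rfl⟩
  have h0 (u : H) : ((2 : R) • g u, A u) = ((2 : R) • g' u, A' u) := by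
    simpa [toEnd_apply] using DFunLike.congr_fun h (0, u)
  exact ⟨LinearMap.ext fun u => (isUnit_of_invertible (2 : R)).smul_left_cancel.mp
    (Prod.ext_iff.mp (h0 u)).1, LinearMap.ext fun u => (Prod.ext_iff.mp (h0 u)).2⟩

section Endomorphism

variable (φ : ↥(⋀[R]^2 H) × H →* ↥(⋀[R]^2 H) × H)

theorem map_wedge_zero (v w : H) :
    φ (wedge v w, 0) = (wedge (φ (0, v)).2 (φ (0, w)).2, 0) := by
  simpa only [g2_commutatorElement] using map_commutatorElement φ (0, v) (0, w)

theorem snd_map_mk_zero (ξ : Λ²H) : (φ (ξ, 0)).2 = 0 := by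
  let ψ : Λ²H →+ H := AddMonoidHom.mk' (fun ξ => (φ (ξ, 0)).2) fun ξ η => by
    rw [← g2_mk_zero_mul, map_mul]
    rfl
  have hψ : ψ = 0 := addMonoidHom_ext_wedge fun v w => by simp [ψ, map_wedge_zero]
  exact DFunLike.congr_fun hψ ξ

theorem map_mk (ξ : Λ²H) (u : H) :
    φ (ξ, u) = ((φ (ξ, 0)).1 + (φ (0, u)).1, (φ (0, u)).2) := by
  rw [g2_mk_eq_mul, map_mul, g2_mul_def, snd_map_mk_zero]
  simp

theorem map_zero_mk_mul (u w : H) : φ (0, u) * φ (0, w) =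
    ((φ (⅟(2 : R) • wedge u w, 0)).1 + (φ (0, u + w)).1, (φ (0, u + w)).2) := by
  rw [← map_mul, g2_zero_mk_mul, map_mk]

variable (S : Submonoid ℤ) [Algebra ℤ R] [IsLocalization S R]

noncomputable def linearPart : H →ₗ[R] H :=
  AddMonoidHom.toLinearMapOfIsLocalization S <|
    AddMonoidHom.mk' (fun u => (φ (0, u)).2) fun u w =>
      (congrArg Prod.snd (map_zero_mk_mul φ u w)).symm

noncomputable def centralPart : Λ²H →ₗ[R] Λ²H :=
  AddMonoidHom.toLinearMapOfIsLocalization S <|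
    AddMonoidHom.mk' (fun ξ => (φ (ξ, 0)).1) fun ξ η => by
      rw [← g2_mk_zero_mul, map_mul, g2_mul_def, snd_map_mk_zero]
      simp

@[simp]
theorem linearPart_apply (u : H) : linearPart φ S u = (φ (0, u)).2 := rfl

@[simp]
theorem centralPart_apply (ξ : Λ²H) : centralPart φ S ξ = (φ (ξ, 0)).1 := rfl

theorem centralPart_eq_map2 : centralPart φ S = map2 (linearPart φ S) :=
  LinearMap.toAddMonoidHom_injective <| addMonoidHom_ext_wedge fun v w => by
    simp [map_wedge_zero, map2_wedge]

noncomputable def translationPart : H →ₗ[R] Λ²H :=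
  AddMonoidHom.toLinearMapOfIsLocalization S <|
    AddMonoidHom.mk' (fun u => (φ (0, u)).1) fun u w => by
      have hc : (φ (⅟(2 : R) • wedge u w, 0)).1 =
          ⅟(2 : R) • wedge (φ (0, u)).2 (φ (0, w)).2 := by
        have := LinearMap.congr_fun (centralPart_eq_map2 φ S) (⅟(2 : R) • wedge u w)
        rwa [centralPart_apply, LinearMap.map_smul, map2_wedge] at this
      have h := congrArg Prod.fst (map_zero_mk_mul φ u w)
      rw [g2_mul_def, hc, add_assoc, add_right_inj] at h
      exact h.symm

@[simp]
theorem translationPart_apply (u : H) : translationPart φ S u = (φ (0, u)).1 := rfl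

theorem eq_toEnd : φ = toEnd (⅟(2 : R) • translationPart φ S) (linearPart φ S) := by
  ext ⟨ξ, u⟩ : 1
  rw [toEnd_apply, map_mk φ, ← centralPart_eq_map2 φ S]
  simp [smul_smul, add_comm]

theorem linearPart_comp (ψ : ↥(⋀[R]^2 H) × H →* ↥(⋀[R]^2 H) × H) :
    linearPart (ψ.comp φ) S = linearPart ψ S ∘ₗ linearPart φ S :=
  LinearMap.ext fun u => by
    simpa using congrArg Prod.snd (map_mk ψ (φ (0, u)).1 (φ (0, u)).2)

end Endomorphism

noncomputable def linearPartEquiv (S : Submonoid ℤ) [Algebra ℤ R] [IsLocalization S R]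
    (φ : MulAut (↥(⋀[R]^2 H) × H)) : H ≃ₗ[R] H :=
  .ofLinearMap (linearPart φ.toMonoidHom S) (linearPart φ.symm.toMonoidHom S)
    (by
      rw [← linearPart_comp]
      exact LinearMap.ext fun u => congrArg Prod.snd (φ.apply_symm_apply (0, u)))
    (by
      rw [← linearPart_comp]
      exact LinearMap.ext fun u => congrArg Prod.snd (φ.symm_apply_apply (0, u)))

noncomputable def toAut (f : H →ₗ[R] Λ²H) (A : H ≃ₗ[R] H) : MulAut 𝒢₂ :=
  MonoidHom.toMulEquiv (toEnd (f ∘ₗ A) A) (toEnd (-(map2 A.symm ∘ₗ f)) A.symm)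
    (by
      rw [toEnd_comp, ← toEnd_zero_id, toEnd_inj, A.symm_comp]
      refine ⟨?_, rfl⟩
      ext u
      simp)
    (by
      rw [toEnd_comp, ← toEnd_zero_id, toEnd_inj, A.comp_symm]
      refine ⟨?_, rfl⟩
      ext u
      simp)

theorem toAut_apply (f : H →ₗ[R] Λ²H) (A : H ≃ₗ[R] H) (ξ : Λ²H) (u : H) :
    toAut f A (ξ, u) = ((2 : R) • f (A u) + map2 A ξ, A u) := rfl

theorem toAut_toMonoidHom (f : H →ₗ[R] Λ²H) (A : H ≃ₗ[R] H) :
    (toAut f A).toMonoidHom = toEnd (f ∘ₗ A) A := rfl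

theorem toAut_mul (f f' : H →ₗ[R] Λ²H) (A A' : H ≃ₗ[R] H) :
    toAut (f' + map2 A' ∘ₗ f ∘ₗ A'.symm) (A' * A) = toAut f' A' * toAut f A := by
  refine MulEquiv.toMonoidHom_injective ?_
  change toEnd _ _ = (toEnd (f' ∘ₗ A') A').comp (toEnd (f ∘ₗ A) A)
  rw [toEnd_comp, toEnd_inj]
  constructor <;> ext <;> simp

theorem toAut_injective : Function.Injective (Function.uncurry (toAut (R := R) (H := H))) := by
  rintro ⟨f, A⟩ ⟨f', A'⟩ h
  obtain ⟨hf, hA⟩ := toEnd_inj.mp (congrArg MulEquiv.toMonoidHom h)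
  obtain rfl : A = A' := LinearEquiv.toLinearMap_injective hA
  exact Prod.ext (LinearMap.ext fun u => by simpa using LinearMap.congr_fun hf (A.symm u)) rfl

theorem toAut_surjective (S : Submonoid ℤ) [Algebra ℤ R] [IsLocalization S R] :
    Function.Surjective (Function.uncurry (toAut (R := R) (H := H))) := by
  intro φ
  refine ⟨((⅟(2 : R) • translationPart φ.toMonoidHom S) ∘ₗ (linearPartEquiv S φ).symm,
    linearPartEquiv S φ), MulEquiv.toMonoidHom_injective ?_⟩
  rw [Function.uncurry_apply_pair, toAut_toMonoidHom]
  conv_rhs => rw [eq_toEnd φ.toMonoidHom S]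
  rw [toEnd_inj, LinearMap.comp_assoc, LinearEquiv.symm_comp, LinearMap.comp_id]
  exact ⟨rfl, rfl⟩

end G2

theorem stmt8_general (P : Ideal ℤ) [P.IsPrime]
    {R : Type*} [CommRing R] [Algebra ℤ R] [IsLocalization.AtPrime R P] [Invertible (2 : R)]
    {H : Type*} [AddCommGroup H] [Module R H] :
    ∃ Θ : ((H →ₗ[R] ↥(⋀[R]^2 H)) × (H ≃ₗ[R] H)) ≃ MulAut (↥(⋀[R]^2 H) × H),
      (∀ (f : H →ₗ[R] ↥(⋀[R]^2 H)) (A : H ≃ₗ[R] H) (ξ : ↥(⋀[R]^2 H)) (u : H),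
        Θ (f, A) (ξ, u) = ((2 : R) • f (A u) + map2 (R := R) (A : H →ₗ[R] H) ξ, A u)) ∧
      (∀ (f f' : H →ₗ[R] ↥(⋀[R]^2 H)) (A A' : H ≃ₗ[R] H),
        Θ (f' + map2 (R := R) (A' : H →ₗ[R] H) ∘ₗ f ∘ₗ (A'.symm : H →ₗ[R] H), A' * A) =
          Θ (f', A') * Θ (f, A)) :=
  ⟨.ofBijective _ ⟨toAut_injective, toAut_surjective P.primeCompl⟩, toAut_apply, toAut_mul⟩

/-- The map `(f, A) ↦ ((ξ, u) ↦ (2·f(Au) + Λ²A(ξ), Au))` is a group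
isomorphism from the semidirect product `Hom(H, Λ²H) ⋊ GL(H)` (with action
`(A·f)(u) = Λ²A(f(A⁻¹u))`, i.e. multiplication `(f', A')·(f, A) = (f' + A'·f, A'A)`)
onto the full automorphism group `Aut(𝒢₂)`. -/
theorem stmt8 (P : Ideal ℤ) [P.IsPrime] (hP2 : (2 : ℤ) ∉ P) (hP3 : (3 : ℤ) ∉ P)
    {R : Type*} [CommRing R] [Algebra ℤ R] [IsLocalization.AtPrime R P] [Invertible (2 : R)]
    {H : Type*} [AddCommGroup H] [Module R H] {g : ℕ} (hg : 1 ≤ g)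
    (e : Module.Basis (Fin (2 * g)) R H) :
    ∃ Θ : ((H →ₗ[R] ↥(⋀[R]^2 H)) × (H ≃ₗ[R] H)) ≃ MulAut (↥(⋀[R]^2 H) × H),
      (∀ (f : H →ₗ[R] ↥(⋀[R]^2 H)) (A : H ≃ₗ[R] H) (ξ : ↥(⋀[R]^2 H)) (u : H),
        Θ (f, A) (ξ, u) = ((2 : R) • f (A u) + map2 (R := R) (A : H →ₗ[R] H) ξ, A u)) ∧
      (∀ (f f' : H →ₗ[R] ↥(⋀[R]^2 H)) (A A' : H ≃ₗ[R] H),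
        Θ (f' + map2 (R := R) (A' : H →ₗ[R] H) ∘ₗ f ∘ₗ (A'.symm : H →ₗ[R] H), A' * A) =
          Θ (f', A') * Θ (f, A)) :=
  stmt8_general P

end Paper
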